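/- arXiv:math/0209383 — 3 statements merged into one kernel-verified Lean document; each statement's English description precedes it below -/
import Mathlib

section
/- Let θ : (0,∞) → ℂ be continuous. Assume (i) there is δ > 0 such that θ(t) = O(e^{−δt}) as t → ∞, and (ii) there are a strictly increasing sequence of real numbers α₀ < α₁ < α₂ < ⋯ with αₖ → +∞ and complex numbers c₀, c₁, c₂, … such that for every K ∈ ℕ one has θ(t) − ∑_{k<K} cₖ t^{αₖ} = O(t^{α_K}) as t → 0⁺ (an asymptotic expansion of θ at 0). Then the Mellin integral M(z) = ∫₀^∞ t^{z−1} θ(t) dt converges absolutely for Re(z) > −α₀ and there is a function F, holomorphic on ℂ \ {−αₖ : k ∈ ℕ}, which agrees with M on the half-plane Re(z) > −α₀ and which has at each point z = −αₖ at worst a simple pole with residue cₖ; that is, for every k the function z ↦ (z + αₖ) F(z) extends holomorphically across −αₖ with value cₖ there. -/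
/-!
Split `θ = 1_{(0,1]} θ + 1_{(1,∞)} θ`. By exponential decay the tail has an entire Mellin
transform. Near `0`, subtracting the first `K` terms of the expansion leaves a remainder
`O(t ^ α K)`, whose Mellin transform over `(0,1]` is holomorphic on `re s > -α K`, while
`∫₀¹ t ^ (s - 1) t ^ α k dt = 1 / (s + α k)`. Hence on each half-plane `re s > -α K` the Mellin
transform of `θ` is a holomorphic function plus `∑_{k<K} c k / (s + α k)`; these expressions
agree on overlaps, and gluing them gives the continuation with its simple poles.
-/

open MeasureTheory Set Filter Asymptotics Topology

theorem MeasureTheory.LocallyIntegrableOn.indicator {X E : Type*} [MeasurableSpace X]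
    [TopologicalSpace X] [NormedAddCommGroup E] {μ : Measure X} {f : X → E} {s t : Set X}
    (hf : LocallyIntegrableOn f s μ) (ht : MeasurableSet t) :
    LocallyIntegrableOn (t.indicator f) s μ := fun x hx =>
  let ⟨U, hU, hfU⟩ := hf x hx
  ⟨U, hU, hfU.indicator ht⟩

section Indicator

variable {E : Type*} [NormedAddCommGroup E]

theorem indicator_Ioc_eventuallyEq_self (f : ℝ → E) :
    (Ioc 0 1).indicator f =ᶠ[𝓝[>] 0] f := by
  filter_upwards [Ioo_mem_nhdsGT one_pos] with t ht
  exact indicator_of_mem (Ioo_subset_Ioc_self ht) f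

theorem indicator_Ioc_eventuallyEq_zero (f : ℝ → E) :
    (Ioc 0 1).indicator f =ᶠ[atTop] 0 := by
  filter_upwards [eventually_gt_atTop 1] with t ht
  exact indicator_of_notMem (fun h => ht.not_ge h.2) f

theorem indicator_Ioi_one_eventuallyEq_zero (f : ℝ → E) :
    (Ioi 1).indicator f =ᶠ[𝓝[>] 0] 0 := by
  filter_upwards [Ioo_mem_nhdsGT one_pos] with t ht
  exact indicator_of_notMem (not_lt.mpr ht.2.le) f

theorem indicator_Ioi_one_eventuallyEq_self (f : ℝ → E) :
    (Ioi 1).indicator f =ᶠ[atTop] f := by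
  filter_upwards [eventually_gt_atTop 1] with t ht
  exact indicator_of_mem ht f

theorem indicator_Ioc_add_indicator_Ioi_one (f : ℝ → E) {t : ℝ} (ht : 0 < t) :
    (Ioc 0 1).indicator f t + (Ioi 1).indicator f t = f t := by
  rw [← congrFun (indicator_union_of_disjoint (Ioc_disjoint_Ioi le_rfl) f) t,
    Ioc_union_Ioi_eq_Ioi zero_le_one, indicator_of_mem (mem_Ioi.mpr ht)]

end Indicator

section Mellin

variable {E : Type*} [NormedAddCommGroup E] [NormedSpace ℂ E] {f : ℝ → E} {a : ℝ} {s : ℂ}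

theorem mellinConvergent_indicator_Ioc (hfc : LocallyIntegrableOn f (Ioi 0))
    (hf_bot : f =O[𝓝[>] 0] (· ^ a)) (hs : -a < s.re) :
    MellinConvergent ((Ioc 0 1).indicator f) s :=
  mellinConvergent_of_isBigO_rpow_exp one_pos (hfc.indicator measurableSet_Ioc)
    ((indicator_Ioc_eventuallyEq_zero f).trans_isBigO (isBigO_zero _ _))
    ((indicator_Ioc_eventuallyEq_self f).trans_isBigO (by simpa only [neg_neg] using hf_bot)) hs

theorem differentiableAt_mellin_indicator_Ioc (hfc : LocallyIntegrableOn f (Ioi 0))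
    (hf_bot : f =O[𝓝[>] 0] (· ^ a)) (hs : -a < s.re) :
    DifferentiableAt ℂ (mellin ((Ioc 0 1).indicator f)) s :=
  mellin_differentiableAt_of_isBigO_rpow_exp one_pos (hfc.indicator measurableSet_Ioc)
    ((indicator_Ioc_eventuallyEq_zero f).trans_isBigO (isBigO_zero _ _))
    ((indicator_Ioc_eventuallyEq_self f).trans_isBigO (by simpa only [neg_neg] using hf_bot)) hs

theorem mellinConvergent_indicator_Ioi_one (hfc : LocallyIntegrableOn f (Ioi 0)) (ha : 0 < a)
    (hf_top : f =O[atTop] fun t => Real.exp (-a * t)) (s : ℂ) :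
    MellinConvergent ((Ioi 1).indicator f) s :=
  mellinConvergent_of_isBigO_rpow_exp ha (hfc.indicator measurableSet_Ioi)
    ((indicator_Ioi_one_eventuallyEq_self f).trans_isBigO hf_top)
    ((indicator_Ioi_one_eventuallyEq_zero f).trans_isBigO (isBigO_zero _ _)) (sub_one_lt s.re)

theorem differentiable_mellin_indicator_Ioi_one (hfc : LocallyIntegrableOn f (Ioi 0)) (ha : 0 < a)
    (hf_top : f =O[atTop] fun t => Real.exp (-a * t)) :
    Differentiable ℂ (mellin ((Ioi 1).indicator f)) := fun s =>
  mellin_differentiableAt_of_isBigO_rpow_exp ha (hfc.indicator measurableSet_Ioi)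
    ((indicator_Ioi_one_eventuallyEq_self f).trans_isBigO hf_top)
    ((indicator_Ioi_one_eventuallyEq_zero f).trans_isBigO (isBigO_zero _ _)) (sub_one_lt s.re)

theorem mellin_eq_mellin_indicator_Ioc_add_mellin_indicator_Ioi_one
    (h₀ : MellinConvergent ((Ioc 0 1).indicator f) s)
    (h₁ : MellinConvergent ((Ioi 1).indicator f) s) :
    mellin f s = mellin ((Ioc 0 1).indicator f) s + mellin ((Ioi 1).indicator f) s := by
  rw [← (hasMellin_add h₀ h₁).2]
  exact setIntegral_congr_fun measurableSet_Ioi fun t ht =>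
    congrArg _ (indicator_Ioc_add_indicator_Ioi_one f ht).symm

end Mellin

theorem mellin_indicator_Ioc_add_rpow {f : ℝ → ℂ} {a : ℝ} {s : ℂ}
    (hf : MellinConvergent ((Ioc 0 1).indicator f) s) (hs : -a < s.re) (c : ℂ) :
    mellin ((Ioc 0 1).indicator fun t => f t + c * ((t ^ a : ℝ) : ℂ)) s =
      mellin ((Ioc 0 1).indicator f) s + c / (s + a) := by
  have hpow := hasMellin_cpow_Ioc (a : ℂ) (s := s) (by rw [Complex.ofReal_re]; linarith)
  have hsplit : ((Ioc 0 1).indicator fun t => f t + c * ((t ^ a : ℝ) : ℂ)) =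
      fun t => (Ioc 0 1).indicator f t +
        c • (Ioc 0 1).indicator (fun t : ℝ => (t : ℂ) ^ (a : ℂ)) t := by
    funext t
    by_cases ht : t ∈ Ioc 0 1
    · simp only [indicator_of_mem ht, smul_eq_mul, Complex.ofReal_cpow ht.1.le]
    · simp only [indicator_of_notMem ht, smul_zero, add_zero]
  rw [hsplit, (hasMellin_add hf (hpow.1.const_smul c)).2, mellin_const_smul, hpow.2,
    smul_eq_mul, mul_one_div]

section Expansion

variable {θ : ℝ → ℂ} {c : ℕ → ℂ} {α : ℕ → ℝ}

noncomputable def expansionRemainder (θ : ℝ → ℂ) (c : ℕ → ℂ) (α : ℕ → ℝ) (K : ℕ) (t : ℝ) : ℂ :=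
  θ t - ∑ k ∈ Finset.range K, c k * ((t ^ α k : ℝ) : ℂ)

theorem expansionRemainder_zero : expansionRemainder θ c α 0 = θ := by
  funext t
  simp only [expansionRemainder, Finset.range_zero, Finset.sum_empty, sub_zero]

theorem expansionRemainder_eq_succ_add (K : ℕ) :
    expansionRemainder θ c α K =
      fun t => expansionRemainder θ c α (K + 1) t + c K * ((t ^ α K : ℝ) : ℂ) := by
  funext t
  simp only [expansionRemainder, Finset.sum_range_succ]
  ring

theorem ContinuousOn.expansionRemainder (hθ : ContinuousOn θ (Ioi 0)) (K : ℕ) :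
    ContinuousOn (expansionRemainder θ c α K) (Ioi 0) :=
  hθ.sub <| continuousOn_finsetSum _ fun _ _ => continuousOn_const.mul <|
    Complex.continuous_ofReal.comp_continuousOn <|
      continuousOn_id.rpow_const fun _ ht => Or.inl (ne_of_gt ht)

end Expansion

theorem Complex.add_ofReal_eq_zero_iff {s : ℂ} {x : ℝ} : s + x = 0 ↔ s = ((-x : ℝ) : ℂ) := by
  rw [Complex.ofReal_neg, add_eq_zero_iff_eq_neg]

section Continuation

variable {α : ℕ → ℝ} {c : ℕ → ℂ} {R : ℕ → ℂ → ℂ} {K : ℕ} {s : ℂ}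

noncomputable def principalPart (c : ℕ → ℂ) (α : ℕ → ℝ) (K : ℕ) (s : ℂ) : ℂ :=
  ∑ k ∈ Finset.range K, c k / (s + α k)

theorem principalPart_succ (c : ℕ → ℂ) (α : ℕ → ℝ) (K : ℕ) (s : ℂ) :
    principalPart c α (K + 1) s = principalPart c α K s + c K / (s + α K) :=
  Finset.sum_range_succ _ _

theorem differentiableAt_principalPart (hs : ∀ j < K, s ≠ ((-α j : ℝ) : ℂ)) :
    DifferentiableAt ℂ (principalPart c α K) s :=
  DifferentiableAt.fun_sum fun j hj => (differentiableAt_const _).div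
    (differentiableAt_id.add_const _)
    (mt Complex.add_ofReal_eq_zero_iff.mp (hs j (Finset.mem_range.mp hj)))

/-- On the half-plane `-α K < re s` the continuation is `R K + principalPart c α K`; taking the
least such `K` is harmless because consecutive choices agree once
`R K s = R (K + 1) s + c K / (s + α K)`. -/
noncomputable def gluedContinuation (R : ℕ → ℂ → ℂ) (c : ℕ → ℂ) (α : ℕ → ℝ) (s : ℂ) : ℂ :=
  R (sInf {K | -α K < s.re}) s + principalPart c α (sInf {K | -α K < s.re}) s

theorem add_principalPart_eq_of_le (hα : Monotone α)
    (hR_succ : ∀ K s, -α K < s.re → R K s = R (K + 1) s + c K / (s + α K))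
    {K' : ℕ} (hK : K ≤ K') (hs : -α K < s.re) :
    R K s + principalPart c α K s = R K' s + principalPart c α K' s := by
  induction K', hK using Nat.le_induction with
  | base => rfl
  | succ n hn ih =>
    rw [ih, hR_succ n s ((neg_le_neg (hα hn)).trans_lt hs), principalPart_succ]
    ring

theorem gluedContinuation_eq (hα : Monotone α)
    (hR_succ : ∀ K s, -α K < s.re → R K s = R (K + 1) s + c K / (s + α K))
    (hs : -α K < s.re) :
    gluedContinuation R c α s = R K s + principalPart c α K s :=
  add_principalPart_eq_of_le hα hR_succ (Nat.sInf_le hs)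
    (Nat.sInf_mem (s := {K | -α K < s.re}) ⟨K, hs⟩)

theorem isOpen_neg_lt_re (a : ℝ) : IsOpen {s : ℂ | -a < s.re} :=
  isOpen_lt continuous_const Complex.continuous_re

theorem differentiableOn_gluedContinuation (hα : Monotone α)
    (hαtop : Tendsto α atTop atTop)
    (hR : ∀ K s, -α K < s.re → DifferentiableAt ℂ (R K) s)
    (hR_succ : ∀ K s, -α K < s.re → R K s = R (K + 1) s + c K / (s + α K)) :
    DifferentiableOn ℂ (gluedContinuation R c α) {s | ∀ k, s ≠ ((-α k : ℝ) : ℂ)} := by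
  intro s hs
  obtain ⟨K, hK⟩ := (hαtop.eventually_gt_atTop (-s.re)).exists
  have hKs : -α K < s.re := by linarith
  have heq : gluedContinuation R c α =ᶠ[𝓝 s] fun z => R K z + principalPart c α K z :=
    eventually_of_mem ((isOpen_neg_lt_re (α K)).mem_nhds hKs) fun z hz =>
      gluedContinuation_eq hα hR_succ hz
  exact (((hR K s hKs).add (differentiableAt_principalPart fun j _ => hs j)).congr_of_eventuallyEq
    heq).differentiableWithinAt

theorem exists_residue_gluedContinuation (hα : StrictMono α)
    (hR : ∀ K s, -α K < s.re → DifferentiableAt ℂ (R K) s)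
    (hR_succ : ∀ K s, -α K < s.re → R K s = R (K + 1) s + c K / (s + α K)) (k : ℕ) :
    ∃ U ∈ 𝓝 ((-α k : ℝ) : ℂ), ∃ G : ℂ → ℂ, DifferentiableOn ℂ G U ∧
      (∀ z ∈ U, z ≠ ((-α k : ℝ) : ℂ) → G z = (z + (α k : ℂ)) * gluedContinuation R c α z) ∧
      G ((-α k : ℝ) : ℂ) = c k := by
  let U : Set ℂ := {s | -α (k + 1) < s.re} \ (Finset.range k).image fun j => ((-α j : ℝ) : ℂ)
  have hU : ∀ s ∈ U, ∀ j < k, s ≠ ((-α j : ℝ) : ℂ) := fun s hs j hj h =>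
    hs.2 (Finset.mem_image.mpr ⟨j, Finset.mem_range.mpr hj, h.symm⟩)
  refine ⟨U, ?_, fun s => (s + α k) * (R (k + 1) s + principalPart c α k s) + c k, ?_, ?_, ?_⟩
  · refine ((isOpen_neg_lt_re _).sdiff (Finset.isClosed _)).mem_nhds ⟨?_, fun h => ?_⟩
    · simpa only [mem_ofPred_eq, Complex.ofReal_re, neg_lt_neg_iff] using hα k.lt_succ_self
    · obtain ⟨j, hj, hjk⟩ := Finset.mem_image.mp h
      exact (hα (Finset.mem_range.mp hj)).ne (neg_inj.mp (Complex.ofReal_injective hjk))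
  · intro s hs
    exact (((differentiableAt_id.add_const _).mul ((hR (k + 1) s hs.1).add
      (differentiableAt_principalPart (hU s hs)))).add_const _).differentiableWithinAt
  · intro s hs hsk
    have hsk' : s + α k ≠ 0 := mt Complex.add_ofReal_eq_zero_iff.mp hsk
    rw [gluedContinuation_eq hα.monotone hR_succ hs.1, principalPart_succ]
    field_simp
    ring
  · simp only [Complex.add_ofReal_eq_zero_iff.mpr rfl, zero_mul, zero_add]

end Continuation

/-- Mellin continuation of a function with exponential decay at infinity and an
asymptotic expansion at `0⁺`: the Mellin integral converges absolutely for
`Re z > -α 0` and extends to a function holomorphic away from the points `-αₖ`,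
with at worst simple poles there of residue `cₖ`. -/
theorem stmt_0
    (θ : ℝ → ℂ) (hθcont : ContinuousOn θ (Set.Ioi 0))
    (δ : ℝ) (hδ : 0 < δ)
    (hdecay : Asymptotics.IsBigO Filter.atTop θ (fun t : ℝ => Real.exp (-δ * t)))
    (α : ℕ → ℝ) (hα : StrictMono α)
    (hαtop : Filter.Tendsto α Filter.atTop Filter.atTop)
    (c : ℕ → ℂ)
    (hexp : ∀ K : ℕ,
      Asymptotics.IsBigO (nhdsWithin (0 : ℝ) (Set.Ioi 0))
        (fun t : ℝ => θ t - ∑ k ∈ Finset.range K, c k * ((t ^ α k : ℝ) : ℂ))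
        (fun t : ℝ => t ^ α K)) :
    (∀ z : ℂ, -α 0 < z.re →
        MeasureTheory.IntegrableOn (fun t : ℝ => (t : ℂ) ^ (z - 1) * θ t) (Set.Ioi 0)) ∧
    ∃ F : ℂ → ℂ,
      DifferentiableOn ℂ F {z : ℂ | ∀ k : ℕ, z ≠ ((-α k : ℝ) : ℂ)} ∧
      (∀ z : ℂ, -α 0 < z.re →
        F z = ∫ t in Set.Ioi (0 : ℝ), (t : ℂ) ^ (z - 1) * θ t) ∧
      (∀ k : ℕ, ∃ U ∈ nhds ((-α k : ℝ) : ℂ), ∃ G : ℂ → ℂ,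
        DifferentiableOn ℂ G U ∧
        (∀ z ∈ U, z ≠ ((-α k : ℝ) : ℂ) → G z = (z + (α k : ℂ)) * F z) ∧
        G ((-α k : ℝ) : ℂ) = c k) := by
  have hθloc : LocallyIntegrableOn θ (Ioi 0) := hθcont.locallyIntegrableOn measurableSet_Ioi
  have hrem_loc (K : ℕ) : LocallyIntegrableOn (expansionRemainder θ c α K) (Ioi 0) :=
    (hθcont.expansionRemainder K).locallyIntegrableOn measurableSet_Ioi
  have hrem_bot (K : ℕ) : expansionRemainder θ c α K =O[𝓝[>] 0] (· ^ α K) := hexp K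
  have hθ_bot : θ =O[𝓝[>] 0] (· ^ α 0) := by
    simpa only [expansionRemainder_zero] using hrem_bot 0
  let R (K : ℕ) (s : ℂ) : ℂ :=
    mellin ((Ioc 0 1).indicator (expansionRemainder θ c α K)) s + mellin ((Ioi 1).indicator θ) s
  have hR (K : ℕ) (s : ℂ) (hs : -α K < s.re) : DifferentiableAt ℂ (R K) s :=
    (differentiableAt_mellin_indicator_Ioc (hrem_loc K) (hrem_bot K) hs).add
      (differentiable_mellin_indicator_Ioi_one hθloc hδ hdecay s)
  have hR_succ (K : ℕ) (s : ℂ) (hs : -α K < s.re) : R K s = R (K + 1) s + c K / (s + α K) := by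
    have hs' : -α (K + 1) < s.re := (neg_lt_neg (hα K.lt_succ_self)).trans hs
    have hconv := mellinConvergent_indicator_Ioc (hrem_loc (K + 1)) (hrem_bot (K + 1)) hs'
    simp only [R, expansionRemainder_eq_succ_add K (θ := θ), mellin_indicator_Ioc_add_rpow hconv hs]
    ring
  refine ⟨fun s hs => ?_, gluedContinuation R c α,
    differentiableOn_gluedContinuation hα.monotone hαtop hR hR_succ, fun s hs => ?_,
    exists_residue_gluedContinuation hα hR hR_succ⟩
  · exact mellinConvergent_of_isBigO_rpow_exp hδ hθloc hdecay
      (by simpa only [neg_neg] using hθ_bot) hs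
  · rw [gluedContinuation_eq hα.monotone hR_succ hs]
    simp only [R, principalPart, Finset.range_zero, Finset.sum_empty, add_zero,
      expansionRemainder_zero]
    exact (mellin_eq_mellin_indicator_Ioc_add_mellin_indicator_Ioi_one
      (mellinConvergent_indicator_Ioc hθloc hθ_bot hs)
      (mellinConvergent_indicator_Ioi_one hθloc hδ hdecay s)).symm
end

section
/- Let V be a finite-dimensional complex vector space and V = U ⊕ W a direct sum decomposition. Let T : V → V be a linear endomorphism with T(U) ⊆ U and T(W) ⊆ W such that every eigenvalue of the restriction T|U has absolute value strictly greater than the absolute value of every eigenvalue of the restriction T|W. Let g : V → V be an invertible linear map and set T' = g ∘ T ∘ g⁻¹. Assume that also T'(U) ⊆ U and T'(W) ⊆ W and that every eigenvalue of T'|U has absolute value strictly greater than that of every eigenvalue of T'|W. Then g(U) = U. -/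
/-!
Since the eigenvalues of `T|U` and `T|W` are disjoint, `U` is the sum of the generalized
eigenspaces of `T` for the eigenvalues of `T|U`, and `g` carries it onto the sum of the
generalized eigenspaces of `T'` for the same eigenvalues. The separation hypotheses say that
the eigenvalues of `T|U` and of `T'|U` are both upward closed, for the absolute value, in the
common spectrum of `T` and `T'`; hence one set contains the other, so one of `g(U)`, `U`
contains the other, and they have the same dimension.
-/

open Module Module.End Submodule

theorem Set.subset_or_subset_of_upward_closed {α β : Type*} [LinearOrder β] (f : α → β)
    {σ s t : Set α} (hs : s ⊆ σ) (ht : t ⊆ σ)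
    (hs_up : ∀ a ∈ s, ∀ b ∈ σ, f a ≤ f b → b ∈ s)
    (ht_up : ∀ a ∈ t, ∀ b ∈ σ, f a ≤ f b → b ∈ t) :
    s ⊆ t ∨ t ⊆ s := by
  by_contra! ⟨hst, hts⟩
  obtain ⟨a, has, hat⟩ := Set.not_subset.mp hst
  obtain ⟨b, hbt, hbs⟩ := Set.not_subset.mp hts
  rcases le_total (f a) (f b) with hab | hba
  · exact hbs (hs_up a has b (ht hbt) hab)
  · exact hat (ht_up b hbt a (hs has) hba)

namespace Module.End

variable {R M N : Type*} [CommRing R] [AddCommGroup M] [Module R M] [AddCommGroup N] [Module R N]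

theorem maxGenEigenspace_eq_bot_iff {f : End R M} {μ : R} :
    f.maxGenEigenspace μ = ⊥ ↔ ¬ f.HasEigenvalue μ := by
  rw [← not_ne_iff]
  exact (hasUnifEigenvalue_iff_hasUnifEigenvalue_one ENat.top_pos).not

theorem map_genEigenspace_conj (e : M ≃ₗ[R] N) (f : End R M) (μ : R) (k : ℕ∞) :
    (f.genEigenspace μ k).map (e : M →ₗ[R] N) = (e.conj f).genEigenspace μ k := by
  have hpow : ∀ l : ℕ, (e.conj f - μ • 1) ^ l = e.conj ((f - μ • 1) ^ l) := fun l => by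
    have := map_pow (e.conjAlgEquiv R) (f - μ • 1) l
    simp only [map_sub, map_smul, map_one, LinearEquiv.conjAlgEquiv_apply] at this
    exact this.symm
  ext x
  simp [Submodule.map_equiv_eq_comap_symm, mem_genEigenspace, hpow]

theorem hasEigenvalue_conj_iff (e : M ≃ₗ[R] N) {f : End R M} {μ : R} :
    (e.conj f).HasEigenvalue μ ↔ f.HasEigenvalue μ := by
  rw [HasEigenvalue, HasUnifEigenvalue, ← map_genEigenspace_conj, ne_eq, Submodule.map_eq_bot_iff]
  rfl

theorem inf_maxGenEigenspace_eq_bot_iff {f : End R M} {p : Submodule R M}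
    (hfp : ∀ x ∈ p, f x ∈ p) {μ : R} :
    p ⊓ f.maxGenEigenspace μ = ⊥ ↔ ¬ HasEigenvalue (f.restrict hfp) μ := by
  rw [Submodule.inf_genEigenspace f p hfp,
    (map_injective_of_injective p.injective_subtype).eq_iff' (map_bot _),
    maxGenEigenspace_eq_bot_iff]

theorem HasEigenvalue.of_restrict {f : End R M} {p : Submodule R M} (hfp : ∀ x ∈ p, f x ∈ p)
    {μ : R} (h : HasEigenvalue (f.restrict hfp) μ) : f.HasEigenvalue μ := by
  by_contra hf
  rw [← maxGenEigenspace_eq_bot_iff] at hf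
  exact (inf_maxGenEigenspace_eq_bot_iff hfp).mp (by rw [hf, inf_bot_eq]) h

section IsCompl

variable {f : End R M} {p q : Submodule R M}

theorem projection_mem_maxGenEigenspace (hpq : IsCompl p q) (hfp : ∀ x ∈ p, f x ∈ p)
    (hfq : ∀ x ∈ q, f x ∈ q) {μ : R} {x : M} (hx : x ∈ f.maxGenEigenspace μ) :
    p.projection q hpq x ∈ f.maxGenEigenspace μ := by
  have hcomm : Commute (p.projection q hpq) f :=
    (LinearMap.IsIdempotentElem.commute_iff (isIdempotentElem_projection hpq)).mpr
      ⟨by rwa [range_projection], by rwa [ker_projection]⟩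
  exact f.mapsTo_maxGenEigenspace_of_comm hcomm.symm μ hx

theorem maxGenEigenspace_le_of_not_hasEigenvalue_restrict (hpq : IsCompl p q)
    (hfp : ∀ x ∈ p, f x ∈ p) (hfq : ∀ x ∈ q, f x ∈ q) {μ : R}
    (hμ : ¬ HasEigenvalue (f.restrict hfq) μ) : f.maxGenEigenspace μ ≤ p := by
  intro x hx
  have hxq : x - p.projection q hpq x ∈ q ⊓ f.maxGenEigenspace μ :=
    ⟨sub_projection_mem hpq x, sub_mem hx (projection_mem_maxGenEigenspace hpq hfp hfq hx)⟩
  rw [(inf_maxGenEigenspace_eq_bot_iff hfq).mpr hμ, mem_bot, sub_eq_zero] at hxq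
  exact hxq ▸ projection_apply_mem hpq x

theorem HasEigenvalue.restrict_or_restrict (hpq : IsCompl p q) (hfp : ∀ x ∈ p, f x ∈ p)
    (hfq : ∀ x ∈ q, f x ∈ q) {μ : R} (h : f.HasEigenvalue μ) :
    HasEigenvalue (f.restrict hfp) μ ∨ HasEigenvalue (f.restrict hfq) μ := by
  by_contra! ⟨hp, hq⟩
  have hbot := le_inf (maxGenEigenspace_le_of_not_hasEigenvalue_restrict hpq hfp hfq hq)
    (maxGenEigenspace_le_of_not_hasEigenvalue_restrict hpq.symm hfq hfp hp)
  rw [hpq.inf_eq_bot, le_bot_iff, maxGenEigenspace_eq_bot_iff] at hbot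
  exact hbot h

theorem hasEigenvalue_restrict_of_norm_le [Norm R] (hpq : IsCompl p q)
    (hfp : ∀ x ∈ p, f x ∈ p) (hfq : ∀ x ∈ q, f x ∈ q)
    (hsep : ∀ a b : R, HasEigenvalue (f.restrict hfp) a → HasEigenvalue (f.restrict hfq) b →
      ‖b‖ < ‖a‖)
    {a b : R} (ha : HasEigenvalue (f.restrict hfp) a) (hb : f.HasEigenvalue b)
    (hab : ‖a‖ ≤ ‖b‖) :
    HasEigenvalue (f.restrict hfp) b :=
  (hb.restrict_or_restrict hpq hfp hfq).resolve_right fun hbq => (hsep a b ha hbq).not_ge hab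

end IsCompl

theorem eq_iSup_maxGenEigenspace_of_isCompl {K V : Type*} [Field K] [IsAlgClosed K]
    [AddCommGroup V] [Module K V] [FiniteDimensional K V] {f : End K V} {p q : Submodule K V}
    (hpq : IsCompl p q) (hfp : ∀ x ∈ p, f x ∈ p) (hfq : ∀ x ∈ q, f x ∈ q)
    (hdisj : ∀ μ, HasEigenvalue (f.restrict hfp) μ → ¬ HasEigenvalue (f.restrict hfq) μ) :
    p = ⨆ (μ) (_ : HasEigenvalue (f.restrict hfp) μ), f.maxGenEigenspace μ := by
  refine le_antisymm ?_ (iSup₂_le fun μ hμ =>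
    maxGenEigenspace_le_of_not_hasEigenvalue_restrict hpq hfp hfq (hdisj μ hμ))
  calc p = ⨆ μ, p ⊓ f.maxGenEigenspace μ :=
        eq_iSup_inf_genEigenspace ⊤ hfp (iSup_maxGenEigenspace_eq_top f)
    _ ≤ _ := iSup_le fun μ => by
      by_cases hμ : HasEigenvalue (f.restrict hfp) μ
      · exact inf_le_right.trans (le_iSup₂_of_le μ hμ le_rfl)
      · simp only [(inf_maxGenEigenspace_eq_bot_iff hfp).mpr hμ, bot_le]

end Module.End

/-- If `T` preserves a direct sum decomposition `V = U ⊕ W` with all eigenvalues of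
`T|U` strictly larger in absolute value than all eigenvalues of `T|W`, and the
conjugate `T' = g T g⁻¹` also preserves the decomposition with the same eigenvalue
separation, then `g(U) = U`. -/
theorem stmt_2 {V : Type*} [AddCommGroup V] [Module ℂ V] [FiniteDimensional ℂ V]
    (U W : Submodule ℂ V) (hcompl : IsCompl U W)
    (T : Module.End ℂ V) (hTU : ∀ x ∈ U, T x ∈ U) (hTW : ∀ x ∈ W, T x ∈ W)
    (hsep : ∀ a b : ℂ, Module.End.HasEigenvalue (T.restrict hTU) a →
      Module.End.HasEigenvalue (T.restrict hTW) b → ‖b‖ < ‖a‖)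
    (g : V ≃ₗ[ℂ] V) (T' : Module.End ℂ V)
    (hT' : T' = g.toLinearMap ∘ₗ T ∘ₗ g.symm.toLinearMap)
    (hT'U : ∀ x ∈ U, T' x ∈ U) (hT'W : ∀ x ∈ W, T' x ∈ W)
    (hsep' : ∀ a b : ℂ, Module.End.HasEigenvalue (T'.restrict hT'U) a →
      Module.End.HasEigenvalue (T'.restrict hT'W) b → ‖b‖ < ‖a‖) :
    Submodule.map g.toLinearMap U = U := by
  replace hT' : T' = g.conj T := hT'
  have hσ : ∀ μ, T'.HasEigenvalue μ ↔ T.HasEigenvalue μ := fun μ =>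
    hT' ▸ hasEigenvalue_conj_iff g
  have hU := eq_iSup_maxGenEigenspace_of_isCompl hcompl hTU hTW fun μ h₁ h₂ =>
    (hsep μ μ h₁ h₂).false
  have hU' := eq_iSup_maxGenEigenspace_of_isCompl hcompl hT'U hT'W fun μ h₁ h₂ =>
    (hsep' μ μ h₁ h₂).false
  have hgU : U.map g.toLinearMap =
      ⨆ (μ) (_ : HasEigenvalue (T.restrict hTU) μ), T'.maxGenEigenspace μ := by
    conv_lhs => rw [hU]
    simp only [Submodule.map_iSup, map_genEigenspace_conj, hT']
  rcases Set.subset_or_subset_of_upward_closed norm (σ := {μ | T.HasEigenvalue μ})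
      (fun μ h => HasEigenvalue.of_restrict hTU h)
      (fun μ h => (hσ μ).mp (HasEigenvalue.of_restrict hT'U h))
      (fun a ha b hb hab => hasEigenvalue_restrict_of_norm_le hcompl hTU hTW hsep ha hb hab)
      (fun a ha b hb hab =>
        hasEigenvalue_restrict_of_norm_le hcompl hT'U hT'W hsep' ha ((hσ b).mpr hb) hab)
    with h | h
  · refine eq_of_le_of_finrank_eq ?_ (g.finrank_map_eq U)
    rw [hgU]
    conv_rhs => rw [hU']
    exact biSup_mono h
  · refine (eq_of_le_of_finrank_eq ?_ (g.finrank_map_eq U).symm).symm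
    rw [hgU]
    conv_lhs => rw [hU']
    exact biSup_mono h
end

section
/- Let G be a locally compact Hausdorff topological group with left Haar measure μ, let U be a compact open subgroup of G, and let Γ be a discrete subgroup of G (discrete in the subspace topology). Let f : G → ℂ be integrable with respect to μ and right U-invariant, i.e. f(gu) = f(g) for all g ∈ G and u ∈ U. Then for all x, y ∈ G the set Γ ∩ yUy⁻¹ is finite and ∑_{γ∈Γ} |f(x⁻¹ γ y)| ≤ (#(Γ ∩ yUy⁻¹) / μ(U)) · ∫_G |f| dμ. In particular the sum ∑_{γ∈Γ} f(x⁻¹ γ y) converges absolutely. -/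
/-!
The map `γ ↦ x⁻¹ γ y U` from `Γ` to `G ⧸ U` has fibres of size at most `#(Γ ∩ yUy⁻¹)`, which is
finite because a discrete subgroup meets the compact set `yUy⁻¹` in a finite set. Since `|f|` is
constant on each coset `gU`, its value there is `μ(U)⁻¹ ∫_{gU} |f|`, and distinct cosets are
disjoint, so every finite partial sum is at most `#(Γ ∩ yUy⁻¹) / μ(U) · ∫ |f|`.
-/

open MeasureTheory

section Discrete

variable {G : Type*} [Group G] [TopologicalSpace G] [IsTopologicalGroup G] [T2Space G]

theorem Subgroup.finite_inter_of_isCompact (Γ : Subgroup G) [DiscreteTopology Γ] {K : Set G}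
    (hK : IsCompact K) : ((Γ : Set G) ∩ K).Finite := by
  refine (hK.inter_left Subgroup.isClosed_of_discrete).finite ?_
  exact isDiscrete_iff_discreteTopology.mpr <| DiscreteTopology.of_subset
    (inferInstanceAs (DiscreteTopology (Γ : Set G))) Set.inter_subset_left

theorem Subgroup.finite_setOf_mem_conj (Γ U : Subgroup G) [DiscreteTopology Γ]
    (hU : IsCompact (U : Set G)) (y : G) : {γ : G | γ ∈ Γ ∧ y⁻¹ * γ * y ∈ U}.Finite := by
  have hK : IsCompact ((fun g => y⁻¹ * g * y) ⁻¹' (U : Set G)) :=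
    ((Homeomorph.mulLeft y⁻¹).trans (Homeomorph.mulRight y)).isCompact_preimage.mpr hU
  exact Γ.finite_inter_of_isCompact hK

end Discrete

theorem Subgroup.card_le_ncard_of_mk_eq {G : Type*} [Group G] {Γ U : Subgroup G} {x y : G}
    (hfin : {γ : G | γ ∈ Γ ∧ y⁻¹ * γ * y ∈ U}.Finite) {s : Finset Γ} {c : G ⧸ U}
    (hs : ∀ γ ∈ s, ((x⁻¹ * γ * y : G) : G ⧸ U) = c) :
    s.card ≤ {γ : G | γ ∈ Γ ∧ y⁻¹ * γ * y ∈ U}.ncard := by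
  rcases s.eq_empty_or_nonempty with rfl | ⟨γ₀, hγ₀⟩
  · simp
  rw [← Set.ncard_coe_finset]
  refine Set.ncard_le_ncard_of_injOn (fun γ : Γ => (γ₀ : G)⁻¹ * γ) (fun γ hγ => ?_)
    (fun γ₁ _ γ₂ _ h => Subtype.ext (mul_left_cancel h)) hfin
  have hU : (x⁻¹ * γ₀ * y)⁻¹ * (x⁻¹ * γ * y) ∈ U :=
    QuotientGroup.eq.mp ((hs γ₀ hγ₀).trans (hs γ hγ).symm)
  refine ⟨Γ.mul_mem (Γ.inv_mem γ₀.2) γ.2, ?_⟩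
  convert hU using 1
  group

theorem QuotientGroup.preimage_mk_singleton {G : Type*} [Group G] {U : Subgroup G} (c : G ⧸ U) :
    (QuotientGroup.mk : G → G ⧸ U) ⁻¹' {c} = (c.out⁻¹ * ·) ⁻¹' (U : Set G) := by
  ext g
  simp only [Set.mem_preimage, Set.mem_singleton_iff, SetLike.mem_coe]
  rw [← QuotientGroup.eq, QuotientGroup.out_eq', eq_comm]

section Cosets

variable {G : Type*} [Group G] [MeasurableSpace G] [MeasurableMul G] {μ : Measure G}
  [μ.IsMulLeftInvariant] {U : Subgroup G} {F : G → ℝ}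

theorem setIntegral_preimage_mk_singleton (hU : MeasurableSet (U : Set G))
    (hinv : ∀ g, ∀ u ∈ U, F (g * u) = F g) (c : G ⧸ U) :
    ∫ g in QuotientGroup.mk ⁻¹' {c}, F g ∂μ = μ.real U * F c.out := by
  rw [QuotientGroup.preimage_mk_singleton]
  have hconst : Set.EqOn F (fun _ => F c.out) ((c.out⁻¹ * ·) ⁻¹' (U : Set G)) := fun g hg => by
    simpa using hinv c.out _ hg
  rw [setIntegral_congr_fun (hU.preimage (measurable_const_mul _)) hconst, setIntegral_const,
    measureReal_def, measure_preimage_mul, smul_eq_mul, measureReal_def]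

theorem mul_sum_out_le_integral (hU : MeasurableSet (U : Set G)) (hF : 0 ≤ F)
    (hFint : Integrable F μ) (hinv : ∀ g, ∀ u ∈ U, F (g * u) = F g) (T : Finset (G ⧸ U)) :
    μ.real U * ∑ c ∈ T, F c.out ≤ ∫ g, F g ∂μ :=
  calc μ.real U * ∑ c ∈ T, F c.out
      = ∑ c ∈ T, ∫ g in QuotientGroup.mk ⁻¹' {c}, F g ∂μ := by
        simp only [Finset.mul_sum, setIntegral_preimage_mk_singleton hU hinv]
    _ = ∫ g in ⋃ c ∈ T, QuotientGroup.mk ⁻¹' {c}, F g ∂μ := by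
        refine (integral_biUnion_finset T (fun c _ => ?_) ?_ fun c _ => hFint.integrableOn).symm
        · rw [QuotientGroup.preimage_mk_singleton]
          exact hU.preimage (measurable_const_mul _)
        · exact fun c _ d _ hcd => (Set.disjoint_singleton.mpr hcd).preimage _
    _ ≤ ∫ g, F g ∂μ := setIntegral_le_integral hFint (.of_forall hF)

end Cosets

theorem sum_le_ncard_div_mul_integral {G : Type*} [Group G] [MeasurableSpace G] [MeasurableMul G]
    {μ : Measure G} [μ.IsMulLeftInvariant] {U Γ : Subgroup G} (hU : MeasurableSet (U : Set G))
    (hμU : 0 < μ.real U) {F : G → ℝ} (hF : 0 ≤ F) (hFint : Integrable F μ)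
    (hinv : ∀ g, ∀ u ∈ U, F (g * u) = F g) {y : G}
    (hfin : {γ : G | γ ∈ Γ ∧ y⁻¹ * γ * y ∈ U}.Finite) (x : G) (s : Finset Γ) :
    ∑ γ ∈ s, F (x⁻¹ * γ * y) ≤
      {γ : G | γ ∈ Γ ∧ y⁻¹ * γ * y ∈ U}.ncard / μ.real U * ∫ g, F g ∂μ := by
  classical
  set N := {γ : G | γ ∈ Γ ∧ y⁻¹ * γ * y ∈ U}.ncard
  let q : Γ → G ⧸ U := fun γ => (x⁻¹ * γ * y : G)
  have hF_out (g : G) : F g = F (g : G ⧸ U).out := by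
    obtain ⟨u, hu⟩ := QuotientGroup.mk_out_eq_mul U g
    rw [hu, hinv g u u.2]
  calc ∑ γ ∈ s, F (x⁻¹ * γ * y)
      = ∑ γ ∈ s, F (q γ).out := Finset.sum_congr rfl fun γ _ => hF_out _
    _ = ∑ c ∈ s.image q, (s.filter (q · = c)).card • F c.out :=
        Finset.sum_comp (fun c => F c.out) q
    _ ≤ ∑ c ∈ s.image q, N * F c.out := by
        refine Finset.sum_le_sum fun c _ => ?_
        rw [nsmul_eq_mul]
        gcongr
        · exact hF _
        · exact Subgroup.card_le_ncard_of_mk_eq hfin fun γ hγ => (Finset.mem_filter.mp hγ).2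
    _ = N * ∑ c ∈ s.image q, F c.out := Finset.mul_sum _ _ _ |>.symm
    _ ≤ N * ((∫ g, F g ∂μ) / μ.real U) := by
        gcongr
        rw [le_div_iff₀' hμU]
        exact mul_sum_out_le_integral hU hF hFint hinv _
    _ = N / μ.real U * ∫ g, F g ∂μ := by ring

theorem stmt_6_general {G : Type*} [Group G] [TopologicalSpace G] [IsTopologicalGroup G]
    [T2Space G] [MeasurableSpace G] [BorelSpace G]
    (μ : MeasureTheory.Measure G) [μ.IsHaarMeasure]
    (U : Subgroup G) (hUopen : IsOpen (U : Set G)) (hUcpt : IsCompact (U : Set G))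
    (Γ : Subgroup G) (hΓdisc : DiscreteTopology Γ)
    (f : G → ℂ) (hf : MeasureTheory.Integrable f μ)
    (hinv : ∀ g : G, ∀ u ∈ U, f (g * u) = f g)
    (x y : G) :
    ({γ : G | γ ∈ Γ ∧ y⁻¹ * γ * y ∈ U}).Finite ∧
    Summable (fun γ : Γ => ‖f (x⁻¹ * (γ : G) * y)‖) ∧
    ∑' γ : Γ, ‖f (x⁻¹ * (γ : G) * y)‖ ≤
      (({γ : G | γ ∈ Γ ∧ y⁻¹ * γ * y ∈ U}).ncard : ℝ) / (μ (U : Set G)).toReal *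
        ∫ g, ‖f g‖ ∂μ := by
  have hfin := Γ.finite_setOf_mem_conj U hUcpt y
  have hμU : 0 < μ.real U :=
    ENNReal.toReal_pos (hUopen.measure_ne_zero μ ⟨1, U.one_mem⟩) hUcpt.measure_ne_top
  have hpartial := sum_le_ncard_div_mul_integral hUopen.measurableSet hμU
    (fun g => norm_nonneg (f g)) hf.norm (fun g u hu => by rw [hinv g u hu]) hfin x
  have hsummable := summable_of_sum_le (fun γ => norm_nonneg _) hpartial
  exact ⟨hfin, hsummable, hsummable.tsum_le_of_sum_le hpartial⟩

/-- Kernel-convergence estimate: for a left Haar measure `μ` on a locally compact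
group `G`, a compact open subgroup `U`, a discrete subgroup `Γ`, and an integrable
right-`U`-invariant function `f`, the set `Γ ∩ yUy⁻¹` is finite and
`∑_{γ∈Γ} ‖f(x⁻¹γy)‖ ≤ #(Γ ∩ yUy⁻¹)/μ(U) · ‖f‖₁`; in particular the series
converges absolutely. -/
theorem stmt_6 {G : Type*} [Group G] [TopologicalSpace G] [IsTopologicalGroup G]
    [LocallyCompactSpace G] [T2Space G] [MeasurableSpace G] [BorelSpace G]
    (μ : MeasureTheory.Measure G) [μ.IsHaarMeasure]
    (U : Subgroup G) (hUopen : IsOpen (U : Set G)) (hUcpt : IsCompact (U : Set G))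
    (Γ : Subgroup G) (hΓdisc : DiscreteTopology Γ)
    (f : G → ℂ) (hf : MeasureTheory.Integrable f μ)
    (hinv : ∀ g : G, ∀ u ∈ U, f (g * u) = f g)
    (x y : G) :
    ({γ : G | γ ∈ Γ ∧ y⁻¹ * γ * y ∈ U}).Finite ∧
    Summable (fun γ : Γ => ‖f (x⁻¹ * (γ : G) * y)‖) ∧
    ∑' γ : Γ, ‖f (x⁻¹ * (γ : G) * y)‖ ≤
      (({γ : G | γ ∈ Γ ∧ y⁻¹ * γ * y ∈ U}).ncard : ℝ) / (μ (U : Set G)).toReal *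
        ∫ g, ‖f g‖ ∂μ :=
  stmt_6_general μ U hUopen hUcpt Γ hΓdisc f hf hinv x y
end
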